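/- Let $n \ge 1$ and $L \ge 1$. For each $l \in \{1, \dots, L\}$, let $\widehat V_l$ be an $n \times n$ complex Hermitian positive semidefinite matrix and $g_l \in \mathbb{C}^n$ with $c_l := \mathrm{Re}(g_l^H \widehat V_l g_l) > 0$; let $\widehat V_0$ be Hermitian positive semidefinite, let $\sigma_l^2 > 0$ and $\tau_l > 0$ be reals, and set $\bar Q = \sum_{l=1}^L \widehat V_l + \widehat V_0$. Define $v_l^* = c_l^{-1/2} \widehat V_l g_l$, $V_l^* = v_l^*(v_l^*)^H$, $V_0^* = \bar Q - \sum_{l=1}^L V_l^*$, and $\bar Q^* = \sum_{l=1}^L V_l^* + V_0^*$. If for every $l$ the downlink constraint $(1 + 1/\tau_l)\,\mathrm{Re}(g_l^H \widehat V_l g_l) \ge \mathrm{Re}(g_l^H \bar Q g_l) + \sigma_l^2$ holds, then for every $l$ the constructed solution satisfies $(1 + 1/\tau_l)\,\mathrm{Re}(g_l^H V_l^* g_l) \ge \mathrm{Re}(g_l^H \bar Q^* g_l) + \sigma_l^2$. -/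

import Mathlib

/-!
The total covariance is unchanged, since `V0* = Q̄ - ∑ V_l*` absorbs the rank-one parts, and the
desired-signal term is unchanged because `g^H v v^H g = |g^H v|^2 = (c / √c)^2 = c` for
`v = c^{-1/2} V̂ g`, `c = g^H V̂ g`. So each new constraint is literally the old one.
-/

open Matrix ComplexOrder

namespace Matrix

variable {n : Type*} [Fintype n]

lemma dotProduct_vecMulVec_mulVec {α : Type*} [CommSemiring α] (x v w y : n → α) :
    x ⬝ᵥ vecMulVec v w *ᵥ y = (x ⬝ᵥ v) * (w ⬝ᵥ y) := by
  rw [vecMulVec_mulVec, op_smul_eq_smul, dotProduct_smul, smul_eq_mul, mul_comm]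

lemma IsHermitian.star_mulVec_dotProduct {α : Type*} [CommSemiring α] [StarRing α]
    {A : Matrix n n α} (hA : A.IsHermitian) (x y : n → α) :
    star (A *ᵥ x) ⬝ᵥ y = star x ⬝ᵥ A *ᵥ y := by
  rw [star_mulVec, hA.eq, dotProduct_mulVec]

lemma IsHermitian.ofReal_re_star_dotProduct_mulVec {A : Matrix n n ℂ} (hA : A.IsHermitian)
    (x : n → ℂ) : ((star x ⬝ᵥ A *ᵥ x).re : ℂ) = star x ⬝ᵥ A *ᵥ x :=
  Complex.ext rfl (by simpa using (hA.im_star_dotProduct_mulVec_self x).symm)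

/-- The paper's `v* = c^{-1/2} V̂ g`; for `c = 0` the junk value `(√0)⁻¹ = 0` gives `v* = 0`. -/
noncomputable def rankOneExtraction (A : Matrix n n ℂ) (g : n → ℂ) : n → ℂ :=
  (((√(star g ⬝ᵥ A *ᵥ g).re)⁻¹ : ℝ) : ℂ) • (A *ᵥ g)

lemma PosSemidef.star_dotProduct_vecMulVec_rankOneExtraction_mulVec {A : Matrix n n ℂ}
    (hA : A.PosSemidef) (g : n → ℂ) :
    star g ⬝ᵥ vecMulVec (rankOneExtraction A g) (star (rankOneExtraction A g)) *ᵥ g =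
      star g ⬝ᵥ A *ᵥ g := by
  have hnonneg : 0 ≤ (star g ⬝ᵥ A *ᵥ g).re := hA.re_dotProduct_nonneg g
  obtain ⟨c, hc⟩ : ∃ c : ℝ, (c : ℂ) = star g ⬝ᵥ A *ᵥ g :=
    ⟨_, hA.isHermitian.ofReal_re_star_dotProduct_mulVec g⟩
  rw [← hc, Complex.ofReal_re] at hnonneg
  have hrc : (√c)⁻¹ * c = √c := by rw [inv_mul_eq_div, Real.div_sqrt]
  have hleft : star g ⬝ᵥ rankOneExtraction A g = ((√c : ℝ) : ℂ) := by
    rw [rankOneExtraction, dotProduct_smul, smul_eq_mul, ← hc, Complex.ofReal_re,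
      ← Complex.ofReal_mul, hrc]
  have hright : star (rankOneExtraction A g) ⬝ᵥ g = ((√c : ℝ) : ℂ) := by
    rw [rankOneExtraction, star_smul, Complex.star_def, Complex.conj_ofReal, smul_dotProduct,
      hA.isHermitian.star_mulVec_dotProduct, smul_eq_mul, ← hc, Complex.ofReal_re,
      ← Complex.ofReal_mul, hrc]
  rw [dotProduct_vecMulVec_mulVec, hleft, hright, ← Complex.ofReal_mul,
    Real.mul_self_sqrt hnonneg, hc]

end Matrix

theorem rank_one_preserves_downlink_constraints_general
    (n L : ℕ)
    (Vhat : Fin L → Matrix (Fin n) (Fin n) ℂ)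
    (hVhat : ∀ l, (Vhat l).PosSemidef)
    (g : Fin L → (Fin n → ℂ))
    (c : Fin L → ℝ) (hc : ∀ l, c l = (star (g l) ⬝ᵥ (Vhat l) *ᵥ (g l)).re)
    (σ2 τ : Fin L → ℝ)
    (Qbar : Matrix (Fin n) (Fin n) ℂ)
    (vstar : Fin L → (Fin n → ℂ))
    (hvstar : ∀ l, vstar l = (((Real.sqrt (c l))⁻¹ : ℝ) : ℂ) • ((Vhat l) *ᵥ (g l)))
    (Vstar : Fin L → Matrix (Fin n) (Fin n) ℂ)
    (hVstar : ∀ l, Vstar l = vecMulVec (vstar l) (star (vstar l)))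
    (V0star : Matrix (Fin n) (Fin n) ℂ)
    (hV0star : V0star = Qbar - ∑ l, Vstar l)
    (Qbarstar : Matrix (Fin n) (Fin n) ℂ)
    (hQbarstar : Qbarstar = ∑ l, Vstar l + V0star)
    (hfeas : ∀ l, (star (g l) ⬝ᵥ Qbar *ᵥ (g l)).re + σ2 l ≤
        (1 + 1 / τ l) * (star (g l) ⬝ᵥ (Vhat l) *ᵥ (g l)).re) :
    ∀ l, (star (g l) ⬝ᵥ Qbarstar *ᵥ (g l)).re + σ2 l ≤
        (1 + 1 / τ l) * (star (g l) ⬝ᵥ (Vstar l) *ᵥ (g l)).re := by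
  intro l
  have hQbar_eq : Qbarstar = Qbar := by rw [hQbarstar, hV0star, add_sub_cancel]
  have hvstar_eq : vstar l = rankOneExtraction (Vhat l) (g l) := by
    rw [hvstar l, hc l, rankOneExtraction]
  rw [hQbar_eq, hVstar l, hvstar_eq,
    (hVhat l).star_dotProduct_vecMulVec_rankOneExtraction_mulVec]
  exact hfeas l

/-- Corollary of Theorem 1: the rank-one-extraction construction preserves
feasibility of all (reformulated) downlink SINR constraints. -/
theorem rank_one_preserves_downlink_constraints
    (n L : ℕ) (hn : 1 ≤ n) (hL : 1 ≤ L)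
    (Vhat : Fin L → Matrix (Fin n) (Fin n) ℂ)
    (hVhat : ∀ l, (Vhat l).PosSemidef)
    (g : Fin L → (Fin n → ℂ))
    (c : Fin L → ℝ) (hc : ∀ l, c l = (star (g l) ⬝ᵥ (Vhat l) *ᵥ (g l)).re)
    (hcpos : ∀ l, 0 < c l)
    (V0hat : Matrix (Fin n) (Fin n) ℂ) (hV0hat : V0hat.PosSemidef)
    (σ2 τ : Fin L → ℝ) (hσ2 : ∀ l, 0 < σ2 l) (hτ : ∀ l, 0 < τ l)
    (Qbar : Matrix (Fin n) (Fin n) ℂ) (hQbar : Qbar = ∑ l, Vhat l + V0hat)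
    (vstar : Fin L → (Fin n → ℂ))
    (hvstar : ∀ l, vstar l = (((Real.sqrt (c l))⁻¹ : ℝ) : ℂ) • ((Vhat l) *ᵥ (g l)))
    (Vstar : Fin L → Matrix (Fin n) (Fin n) ℂ)
    (hVstar : ∀ l, Vstar l = vecMulVec (vstar l) (star (vstar l)))
    (V0star : Matrix (Fin n) (Fin n) ℂ)
    (hV0star : V0star = Qbar - ∑ l, Vstar l)
    (Qbarstar : Matrix (Fin n) (Fin n) ℂ)
    (hQbarstar : Qbarstar = ∑ l, Vstar l + V0star)
    (hfeas : ∀ l, (star (g l) ⬝ᵥ Qbar *ᵥ (g l)).re + σ2 l ≤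
        (1 + 1 / τ l) * (star (g l) ⬝ᵥ (Vhat l) *ᵥ (g l)).re) :
    ∀ l, (star (g l) ⬝ᵥ Qbarstar *ᵥ (g l)).re + σ2 l ≤
        (1 + 1 / τ l) * (star (g l) ⬝ᵥ (Vstar l) *ᵥ (g l)).re :=
  rank_one_preserves_downlink_constraints_general n L Vhat hVhat g c hc σ2 τ Qbar vstar hvstar Vstar
    hVstar V0star hV0star Qbarstar hQbarstar hfeas
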